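/- In the polynomial ring 𝔽₃[x,y], for every positive integer e, the element (xy)^{2·3^{e−1}}·(x² − y²)^{3^{e−1}} lies in the ideal (x^{3^e}, y^{3^e}). -/

import Mathlib

/-! With `q = p ^ k`, Frobenius gives `(a² − b²)^q = a^{2q} − b^{2q}`, so
`(ab)^{2q} (a² − b²)^q = a^{4q} b^{2q} − a^{2q} b^{4q}`, and each term is divisible by
`a^{3q}` or by `b^{3q}`. -/

open MvPolynomial

theorem mul_pow_mul_sq_sub_sq_pow_mem_span {R : Type*} [CommRing R] (p : ℕ) [ExpChar R p]
    (k : ℕ) (a b : R) :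
    (a * b) ^ (2 * p ^ k) * (a ^ 2 - b ^ 2) ^ p ^ k ∈
      Ideal.span {a ^ (3 * p ^ k), b ^ (3 * p ^ k)} := by
  have expand : (a * b) ^ (2 * p ^ k) * (a ^ 2 - b ^ 2) ^ p ^ k
      = a ^ (3 * p ^ k) * (a ^ p ^ k * b ^ (2 * p ^ k))
        - b ^ (3 * p ^ k) * (a ^ (2 * p ^ k) * b ^ p ^ k) := by
    rw [sub_pow_expChar_pow]
    ring
  rw [expand]
  exact sub_mem
    (Ideal.mul_mem_right _ _ (Ideal.subset_span (Set.mem_insert _ _)))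
    (Ideal.mul_mem_right _ _ (Ideal.subset_span (Set.mem_insert_of_mem _ rfl)))

/-- In `𝔽₃[x,y]`, the element `(xy)^{2·3^{e−1}}·(x² − y²)^{3^{e−1}}` lies in the
Frobenius power `(x^{3^e}, y^{3^e})` for every `e > 0`. -/
theorem stmt8 (e : ℕ) (he : 0 < e) :
    (X 0 * X 1 : MvPolynomial (Fin 2) (ZMod 3)) ^ (2 * 3 ^ (e - 1)) *
        ((X 0) ^ 2 - (X 1) ^ 2) ^ (3 ^ (e - 1)) ∈
      Ideal.span ({(X 0) ^ (3 ^ e), (X 1) ^ (3 ^ e)} :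
        Set (MvPolynomial (Fin 2) (ZMod 3))) := by
  obtain ⟨k, rfl⟩ := Nat.exists_eq_add_one_of_ne_zero he.ne'
  rw [Nat.add_sub_cancel, pow_succ']
  exact mul_pow_mul_sq_sub_sq_pow_mem_span 3 k (X 0) (X 1)
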